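/- Suppose w covers w' in Bruhat order with w' = w·(i,j), codes α and α'. Then the row-reading reduced word of w, after deleting its letter at position I = (α_1 + ⋯ + α_i) − α'_i, yields a reduced word for w'. -/

import Mathlib

/-- The Lehmer code of a permutation: `code w i = #{k > i : w k < w i}`. -/
def permCode {n : ℕ} (w : Equiv.Perm (Fin n)) (i : Fin n) : ℕ :=
  (Finset.univ.filter (fun k : Fin n => i < k ∧ w k < w i)).card

/-- The length of a permutation is its number of inversions. -/
def permLen {n : ℕ} (w : Equiv.Perm (Fin n)) : ℕ :=
  (Finset.univ.filter (fun p : Fin n × Fin n => p.1 < p.2 ∧ w p.2 < w p.1)).card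

/-- The simple transposition `s_a = (a, a+1)` (0-based) in `S_n`. -/
def simpleT (n : ℕ) (a : ℕ) : Equiv.Perm (Fin n) :=
  if h : a + 1 < n then Equiv.swap ⟨a, Nat.lt_of_succ_lt h⟩ ⟨a + 1, h⟩ else 1

/-- The `i`-th row word of the row-reading of `w` (0-based): the reflections
`s_{i+αᵢ-1}, s_{i+αᵢ-2}, …, s_i` where `αᵢ = permCode w i`. -/
def rowWord {n : ℕ} (w : Equiv.Perm (Fin n)) (i : Fin n) : List (Equiv.Perm (Fin n)) :=
  (List.range (permCode w i)).map (fun m => simpleT n ((i : ℕ) + permCode w i - 1 - m))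

/-- The row-reading word of `w`: the concatenation `R₁ R₂ ⋯ R_{n-1}`. -/
def rowReading {n : ℕ} (w : Equiv.Perm (Fin n)) : List (Equiv.Perm (Fin n)) :=
  (List.finRange n).flatMap (rowWord w)

/-- One step in the Bruhat order: multiply on the right by a transposition and increase
the length. -/
def bruhatStep {n : ℕ} (u v : Equiv.Perm (Fin n)) : Prop :=
  (∃ a b : Fin n, a ≠ b ∧ v = u * Equiv.swap a b) ∧ permLen u < permLen v

/-- The strict strong Bruhat order on `S_n`. -/
def bruhatLT {n : ℕ} (u v : Equiv.Perm (Fin n)) : Prop :=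
  Relation.TransGen bruhatStep u v

/-- `w` covers `w'` in the strong Bruhat order. -/
def bruhatCovers {n : ℕ} (w w' : Equiv.Perm (Fin n)) : Prop :=
  bruhatLT w' w ∧ ∀ z : Equiv.Perm (Fin n), bruhatLT w' z → ¬ bruhatLT z w

/-!
Row `i` of the row-reading word is `s_{i+αᵢ-1} ⋯ s_i`, whose product is the cycle sending `i` to
`i + αᵢ` and shifting `i+1, …, i+αᵢ` down by one. Peeling the rows off one at a time shows that
the word is reduced, and that the product of the rows after row `i` fixes the first `i+1` positions
and is order-isomorphic to `w` on the remaining ones.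

If `w` covers `w' = w·(i j)`, then `w j < w i`, no position strictly between `i` and `j` carries a
value strictly between `w j` and `w i` (otherwise there is a longer chain), and hence
`ℓ(w') = ℓ(w) - 1`. Here `α'ᵢ` counts the `k > i` with `w k < w j`, so the part of the word after
the letter `s_{i+α'ᵢ}` sends `i` and `j` to `i+α'ᵢ` and `i+α'ᵢ+1`: deleting that letter multiplies
the product on the right by the conjugate `(i j)`.
-/

open Equiv Finset

variable {n : ℕ}

lemma List.le_of_mem_drop_finRange {t : ℕ} {k : Fin n} (h : k ∈ (List.finRange n).drop t) :
    t ≤ (k : ℕ) := by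
  obtain ⟨m, hm, rfl⟩ := List.mem_iff_getElem.mp h
  simp

lemma List.drop_finRange_eq_cons (k : Fin n) :
    (List.finRange n).drop k = k :: (List.finRange n).drop (k + 1) := by
  rw [List.drop_eq_getElem_cons (by simp)]
  simp

lemma List.take_finRange_succ (i : Fin n) :
    (List.finRange n).take (i + 1) = (List.finRange n).take i ++ [i] := by
  simp [List.take_add_one]

lemma List.mem_take_finRange {t : ℕ} {k : Fin n} : k ∈ (List.finRange n).take t ↔ (k : ℕ) < t := by
  simp only [List.mem_take_iff_getElem, List.getElem_finRange, List.length_finRange]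
  exact ⟨by rintro ⟨m, hm, rfl⟩; simp only [Fin.cast_mk]; omega,
    fun hk => ⟨k, by simp only [lt_inf_iff, Fin.is_lt, and_true]; exact hk, rfl⟩⟩

lemma prod_append_swap_cons_mul_swap {α : Type*} [DecidableEq α] (l₁ l₂ : List (Perm α))
    (a b : α) : (l₁ ++ swap (l₂.prod a) (l₂.prod b) :: l₂).prod * swap a b = (l₁ ++ l₂).prod := by
  simp [List.prod_append, swap_apply_apply, mul_assoc]

def descWord (n t a : ℕ) : List (Perm (Fin n)) :=
  (List.range a).map (fun m => simpleT n (t + a - 1 - m))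

lemma rowWord_eq_descWord (u : Perm (Fin n)) (k : Fin n) :
    rowWord u k = descWord n k (permCode u k) := rfl

lemma descWord_add (t a b : ℕ) :
    descWord n t (b + a) = descWord n (t + a) b ++ descWord n t a := by
  simp only [descWord, List.range_add, List.map_append, List.map_map, Function.comp_def]
  congr 2 <;> funext m <;> congr 1 <;> omega

lemma descWord_succ (t a : ℕ) : descWord n t (a + 1) = simpleT n (t + a) :: descWord n t a := by
  rw [add_comm, descWord_add]
  simp [descWord]

lemma simpleT_apply_val {a : ℕ} (h : a + 1 < n) (x : Fin n) :
    (simpleT n a x : ℕ) = if (x : ℕ) = a then a + 1 else if (x : ℕ) = a + 1 then a else x := by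
  simp only [simpleT, dif_pos h, swap_apply_def, Fin.ext_iff]
  split_ifs <;> simp_all

lemma descWord_prod_apply {t a : ℕ} (h : t + a < n) (x : Fin n) :
    ((descWord n t a).prod x : ℕ) =
      if (x : ℕ) = t then t + a else if t < x ∧ x ≤ t + a then x - 1 else x := by
  induction a with
  | zero =>
    simp only [descWord, add_zero, List.range_zero, List.map_nil, List.prod_nil, Perm.coe_one,
      id_eq]
    split_ifs <;> omega
  | succ a ih =>
    rw [descWord_succ, List.prod_cons, Perm.mul_apply, simpleT_apply_val (by omega),
      ih (by omega)]
    split_ifs <;> omega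

lemma descWord_prod_inv_apply {t a : ℕ} (h : t + a < n) (x : Fin n) :
    ((descWord n t a).prod⁻¹ x : ℕ) =
      if (x : ℕ) = t + a then t else if t ≤ x ∧ x < t + a then x + 1 else x := by
  have hx := descWord_prod_apply h ((descWord n t a).prod⁻¹ x)
  rw [← Perm.mul_apply, mul_inv_cancel, Perm.one_apply] at hx
  have := ((descWord n t a).prod⁻¹ x).isLt
  split_ifs at hx ⊢ <;> omega


lemma val_add_permCode_lt (u : Perm (Fin n)) (k : Fin n) : (k : ℕ) + permCode u k < n := by
  have hcode : permCode u k ≤ #(Ioi k) := card_le_card fun q hq => by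
    simp only [mem_filter, mem_univ, true_and] at hq
    exact mem_Ioi.mpr hq.1
  have := k.isLt
  rw [Fin.card_Ioi] at hcode
  omega

lemma card_filter_apply_lt (u : Perm (Fin n)) (x : Fin n) : #{q | u q < x} = x := by
  rw [card_equiv u (t := Iio x) (fun q => by simp), Fin.card_Iio]

def FixesBelow (t : ℕ) (u : Perm (Fin n)) : Prop :=
  ∀ m : Fin n, (m : ℕ) < t → u m = m

def SameOrderFrom (t : ℕ) (u v : Perm (Fin n)) : Prop :=
  ∀ k l : Fin n, t ≤ (k : ℕ) → t ≤ (l : ℕ) → (u k < u l ↔ v k < v l)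

lemma permCode_eq_of_sameOrderFrom {t : ℕ} {u v : Perm (Fin n)} (h : SameOrderFrom t u v)
    {k : Fin n} (hk : t ≤ (k : ℕ)) : permCode u k = permCode v k := by
  unfold permCode
  congr 1
  refine filter_congr fun q _ => and_congr_right fun hkq => h q k ?_ hk
  exact le_trans hk (Fin.le_def.mp hkq.le)

namespace FixesBelow

variable {t : ℕ} {u : Perm (Fin n)}

lemma le_apply (hu : FixesBelow t u) {m : Fin n} (hm : t ≤ (m : ℕ)) : t ≤ (u m : ℕ) := by
  by_contra! h
  have := u.injective (hu (u m) h)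
  omega

lemma val_apply (hu : FixesBelow t u) {m : Fin n} (hm : t ≤ (m : ℕ)) :
    (u m : ℕ) = t + #{q : Fin n | t ≤ (q : ℕ) ∧ u q < u m} := by
  have hbelow : univ.filter (fun q : Fin n => u q < u m ∧ (q : ℕ) < t) =
      univ.filter (fun q : Fin n => (q : ℕ) < t) :=
    filter_congr fun q _ => and_iff_right_of_imp fun hq => by
      rw [Fin.lt_def, hu q hq]; exact lt_of_lt_of_le hq (hu.le_apply hm)
  have habove : univ.filter (fun q : Fin n => u q < u m ∧ ¬ (q : ℕ) < t) =
      univ.filter (fun q : Fin n => t ≤ (q : ℕ) ∧ u q < u m) :=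
    filter_congr fun q _ => by rw [not_lt, and_comm]
  rw [← card_filter_apply_lt u (u m), ← card_filter_add_card_filter_not
    (fun q : Fin n => (q : ℕ) < t), filter_filter, filter_filter, hbelow, habove,
    Fin.card_filter_val_lt, min_eq_right (by omega)]

lemma val_apply_self {k : Fin n} (hu : FixesBelow k u) : (u k : ℕ) = k + permCode u k := by
  rw [hu.val_apply le_rfl, permCode]
  congr 2
  refine filter_congr fun q _ => and_congr_left fun hq => ?_
  rw [Fin.lt_iff_le_and_ne, Fin.le_def]
  exact ⟨fun h => ⟨h, by rintro rfl; exact lt_irrefl _ hq⟩, And.left⟩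

end FixesBelow

def dropRow (u : Perm (Fin n)) (k : Fin n) : Perm (Fin n) := (rowWord u k).prod⁻¹ * u

lemma dropRow_val_apply (u : Perm (Fin n)) (k x : Fin n) :
    (dropRow u k x : ℕ) = if (u x : ℕ) = k + permCode u k then (k : ℕ)
      else if (k : ℕ) ≤ u x ∧ (u x : ℕ) < k + permCode u k then (u x : ℕ) + 1 else u x := by
  rw [dropRow, Perm.mul_apply, rowWord_eq_descWord,
    descWord_prod_inv_apply (val_add_permCode_lt u k)]

namespace FixesBelow

variable {u : Perm (Fin n)} {k : Fin n}

lemma succ_dropRow (hu : FixesBelow k u) : FixesBelow (k + 1) (dropRow u k) := by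
  intro m hm
  apply Fin.ext
  rw [dropRow_val_apply, ← hu.val_apply_self]
  rcases Nat.lt_or_ge m k with hmk | hmk
  · have := hu.le_apply (m := k) le_rfl
    rw [hu m hmk]; split_ifs <;> omega
  · obtain rfl : m = k := Fin.ext (by omega)
    simp

lemma sameOrderFrom_dropRow (hu : FixesBelow k u) : SameOrderFrom (k + 1) (dropRow u k) u := by
  intro x y hx hy
  have hux := hu.le_apply (m := x) (by omega)
  have huy := hu.le_apply (m := y) (by omega)
  have hxk : u x ≠ u k := u.injective.ne (by rintro rfl; omega)
  have hyk : u y ≠ u k := u.injective.ne (by rintro rfl; omega)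
  rw [Fin.lt_def, Fin.lt_def, dropRow_val_apply, dropRow_val_apply, ← hu.val_apply_self]
  rw [Ne, Fin.ext_iff] at hxk hyk
  split_ifs <;> omega

end FixesBelow

def rowsFrom (t : ℕ) (u : Perm (Fin n)) : List (Perm (Fin n)) :=
  ((List.finRange n).drop t).flatMap (rowWord u)

lemma rowsFrom_eq_append (u : Perm (Fin n)) (k : Fin n) :
    rowsFrom k u = rowWord u k ++ rowsFrom (k + 1) u := by
  rw [rowsFrom, List.drop_finRange_eq_cons, List.flatMap_cons, rowsFrom]

lemma rowsFrom_congr {t : ℕ} {u v : Perm (Fin n)} (h : SameOrderFrom t u v) :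
    rowsFrom t u = rowsFrom t v :=
  List.flatMap_congr fun k hk => by
    rw [rowWord_eq_descWord, rowWord_eq_descWord,
      permCode_eq_of_sameOrderFrom h (List.le_of_mem_drop_finRange hk)]

lemma FixesBelow.prod_rowsFrom {t : ℕ} {u : Perm (Fin n)} (hu : FixesBelow t u) :
    (rowsFrom t u).prod = u := by
  induction hd : n - t generalizing t u with
  | zero =>
    have hu1 : u = 1 := Equiv.ext fun m => hu m (by omega)
    rw [rowsFrom, List.drop_eq_nil_of_le (by simp only [List.length_finRange]; omega), hu1]
    rfl
  | succ d ih =>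
    obtain ⟨k, rfl⟩ : ∃ k : Fin n, (k : ℕ) = t := ⟨⟨t, by omega⟩, rfl⟩
    rw [rowsFrom_eq_append, ← rowsFrom_congr hu.sameOrderFrom_dropRow, List.prod_append,
      ih hu.succ_dropRow (by omega), dropRow, mul_inv_cancel_left]

lemma exists_fixesBelow_sameOrderFrom (w : Perm (Fin n)) {t : ℕ} (ht : t ≤ n) :
    ∃ v : Perm (Fin n), FixesBelow t v ∧ SameOrderFrom t v w := by
  induction t with
  | zero => exact ⟨w, fun m hm => absurd hm (Nat.not_lt_zero _), fun _ _ _ _ => Iff.rfl⟩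
  | succ t ih =>
    obtain ⟨v, hfix, hord⟩ := ih (by omega)
    obtain ⟨k, rfl⟩ : ∃ k : Fin n, (k : ℕ) = t := ⟨⟨t, by omega⟩, rfl⟩
    refine ⟨dropRow v k, hfix.succ_dropRow, fun x y hx hy => ?_⟩
    rw [hfix.sameOrderFrom_dropRow x y hx hy, hord x y (by omega) (by omega)]

lemma fixesBelow_prod_rowsFrom (w : Perm (Fin n)) {t : ℕ} (ht : t ≤ n) :
    FixesBelow t (rowsFrom t w).prod ∧ SameOrderFrom t (rowsFrom t w).prod w := by
  obtain ⟨v, hfix, hord⟩ := exists_fixesBelow_sameOrderFrom w ht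
  rw [← rowsFrom_congr hord, hfix.prod_rowsFrom]
  exact ⟨hfix, hord⟩

lemma prod_rowReading (w : Perm (Fin n)) : (rowReading w).prod = w :=
  FixesBelow.prod_rowsFrom (t := 0) fun _ h => absurd h (Nat.not_lt_zero _)

lemma permLen_eq_sum_permCode (u : Perm (Fin n)) : permLen u = ∑ k, permCode u k := by
  simp only [permLen, permCode, card_filter, Fintype.sum_prod_type]

lemma length_rowWord (u : Perm (Fin n)) (k : Fin n) : (rowWord u k).length = permCode u k := by
  simp [rowWord]

lemma length_rowReading (w : Perm (Fin n)) : (rowReading w).length = permLen w := by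
  simp only [rowReading, List.length_flatMap, length_rowWord, permLen_eq_sum_permCode,
    Fin.sum_univ_def]

def inversions (u : Perm (Fin n)) : Finset (Fin n × Fin n) :=
  univ.filter fun p => p.1 < p.2 ∧ u p.2 < u p.1

lemma mem_inversions {u : Perm (Fin n)} {p : Fin n × Fin n} :
    p ∈ inversions u ↔ p.1 < p.2 ∧ u p.2 < u p.1 := by
  simp [inversions]

lemma permLen_mul_swap_of_val_eq_succ {u : Perm (Fin n)} {a b : Fin n} (hab : (b : ℕ) = a + 1)
    (h : u a < u b) : permLen (u * swap a b) = permLen u + 1 := by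
  have hinv : inversions (u * swap a b) =
      insert (a, b) ((inversions u).map ((swap a b).prodCongr (swap a b)).toEmbedding) := by
    ext ⟨x, y⟩
    simp only [mem_inversions, mem_insert, mem_map_equiv, Prod.mk.injEq, Perm.mul_apply,
      prodCongr_symm, symm_swap, prodCongr_apply, Prod.map]
    rw [Fin.lt_def, Fin.lt_def, Fin.lt_def]
    simp only [swap_apply_def]
    split_ifs <;> subst_vars <;>
      simp only [Fin.lt_def, Fin.ext_iff, and_true, true_or, iff_true] at * <;> omega
  have hab' : ¬ b < a := by rw [Fin.lt_def]; omega
  change #(inversions _) = #(inversions u) + 1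
  rw [hinv, card_insert_of_notMem (by simp [mem_inversions, hab']), card_map]

lemma permLen_eq_mul_swap_add_one_of_val_eq_succ {u : Perm (Fin n)} {a b : Fin n}
    (hab : (b : ℕ) = a + 1) (h : u b < u a) : permLen u = permLen (u * swap a b) + 1 := by
  simpa [mul_assoc] using permLen_mul_swap_of_val_eq_succ (u := u * swap a b) hab
    (by simpa [swap_apply_left, swap_apply_right] using h)

lemma permLen_le_mul_swap_add_one_of_val_eq_succ (u : Perm (Fin n)) {a b : Fin n}
    (hab : (b : ℕ) = a + 1) : permLen u ≤ permLen (u * swap a b) + 1 := by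
  rcases lt_or_gt_of_ne (u.injective.ne (Fin.ne_of_val_ne (by omega) : a ≠ b)) with h | h
  · rw [permLen_mul_swap_of_val_eq_succ hab h]; omega
  · rw [permLen_eq_mul_swap_add_one_of_val_eq_succ hab h]

lemma swap_eq_conj_swap {a b c : Fin n} (hab : a ≠ b) (hcb : c ≠ b) :
    swap a b = swap a c * swap c b * swap a c := by
  have h := swap_apply_apply (swap a c) c b
  rwa [swap_apply_right, swap_apply_of_ne_of_ne hab.symm hcb.symm, swap_inv] at h

lemma permLen_lt_mul_swap {u : Perm (Fin n)} {a b : Fin n} (hab : a < b) (h : u a < u b) :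
    permLen u < permLen (u * swap a b) := by
  obtain ⟨g, hg⟩ : ∃ g, (b : ℕ) = a + g + 1 := ⟨b - a - 1, by rw [Fin.lt_def] at hab; omega⟩
  clear hab
  induction g generalizing u a with
  | zero => rw [permLen_mul_swap_of_val_eq_succ hg h]; omega
  | succ g ih =>
    set c : Fin n := ⟨a + 1, by omega⟩
    have hc : (c : ℕ) = a + 1 := rfl
    have hac : a ≠ c := Fin.ne_of_val_ne (by omega)
    have hcb : c ≠ b := Fin.ne_of_val_ne (by omega)
    have hab : a ≠ b := Fin.ne_of_val_ne (by omega)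
    rw [swap_eq_conj_swap hab hcb, ← mul_assoc, ← mul_assoc]
    set v := u * swap a c
    have hvc : v c = u a := by simp [v]
    have hvb : v b = u b := by simp [v, swap_apply_of_ne_of_ne hab.symm hcb.symm]
    have hv'a : (v * swap c b) a = u c := by simp [v, swap_apply_of_ne_of_ne hac hab]
    have hv'c : (v * swap c b) c = u b := by simp [hvb]
    have hvv' := ih (u := v) (a := c) (by rwa [hvc, hvb]) (by omega)
    rcases lt_or_gt_of_ne (u.injective.ne hac.symm) with hca | hac'
    · have h₁ : permLen u = permLen v + 1 := permLen_eq_mul_swap_add_one_of_val_eq_succ hc hca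
      have h₂ : permLen (v * swap c b * swap a c) = permLen (v * swap c b) + 1 :=
        permLen_mul_swap_of_val_eq_succ hc (by rw [hv'a, hv'c]; exact hca.trans h)
      omega
    · have h₁ : permLen v = permLen u + 1 := permLen_mul_swap_of_val_eq_succ hc hac'
      have h₂ := permLen_le_mul_swap_add_one_of_val_eq_succ (v * swap c b) hc
      omega

lemma permLen_eq_mul_swap_add_one {u : Perm (Fin n)} {a b : Fin n} (hab : a < b) (h : u b < u a)
    (hgap : ∀ k, a < k → k < b → u k < u b ∨ u a < u k) :
    permLen u = permLen (u * swap a b) + 1 := by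
  obtain ⟨g, hg⟩ : ∃ g, (b : ℕ) = a + g + 1 := ⟨b - a - 1, by rw [Fin.lt_def] at hab; omega⟩
  clear hab
  induction g generalizing u a with
  | zero => exact permLen_eq_mul_swap_add_one_of_val_eq_succ hg h
  | succ g ih =>
    set c : Fin n := ⟨a + 1, by omega⟩
    have hc : (c : ℕ) = a + 1 := rfl
    have hac : a ≠ c := Fin.ne_of_val_ne (by omega)
    have hcb : c ≠ b := Fin.ne_of_val_ne (by omega)
    have hab : a ≠ b := Fin.ne_of_val_ne (by omega)
    rw [swap_eq_conj_swap hab hcb, ← mul_assoc, ← mul_assoc]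
    set v := u * swap a c
    have hvc : v c = u a := by simp [v]
    have hvb : v b = u b := by simp [v, swap_apply_of_ne_of_ne hab.symm hcb.symm]
    have hv'a : (v * swap c b) a = u c := by simp [v, swap_apply_of_ne_of_ne hac hab]
    have hv'c : (v * swap c b) c = u b := by simp [hvb]
    have hvgap : ∀ k, c < k → k < b → v k < v b ∨ v c < v k := fun k hck hkb => by
      have hka : k ≠ a := Fin.ne_of_val_ne (by rw [Fin.lt_def] at hck; omega)
      rw [hvc, hvb, show v k = u k by simp [v, swap_apply_of_ne_of_ne hka hck.ne']]
      exact hgap k (by rw [Fin.lt_def] at hck ⊢; omega) hkb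
    have hvv' := ih (u := v) (a := c) (by rwa [hvc, hvb]) hvgap (by omega)
    rcases hgap c (by rw [Fin.lt_def]; omega) (by rw [Fin.lt_def]; omega) with hcb' | hac'
    · have h₁ : permLen u = permLen v + 1 :=
        permLen_eq_mul_swap_add_one_of_val_eq_succ hc (hcb'.trans h)
      have h₂ : permLen (v * swap c b * swap a c) = permLen (v * swap c b) + 1 :=
        permLen_mul_swap_of_val_eq_succ hc (by rwa [hv'a, hv'c])
      omega
    · have h₁ : permLen v = permLen u + 1 := permLen_mul_swap_of_val_eq_succ hc hac'
      have h₂ : permLen (v * swap c b) = permLen (v * swap c b * swap a c) + 1 :=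
        permLen_eq_mul_swap_add_one_of_val_eq_succ hc (by rw [hv'a, hv'c]; exact h.trans hac')
      omega

lemma permLen_lt_of_bruhatLT {u v : Perm (Fin n)} (h : bruhatLT u v) : permLen u < permLen v := by
  induction h with
  | single hs => exact hs.2
  | tail _ hs ih => exact ih.trans hs.2

lemma bruhatStep_mul_swap {u : Perm (Fin n)} {a b : Fin n} (hab : a < b) (h : u a < u b) :
    bruhatStep u (u * swap a b) :=
  ⟨⟨a, b, hab.ne, rfl⟩, permLen_lt_mul_swap hab h⟩

section Covers

variable {w : Perm (Fin n)} {i j : Fin n}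

lemma apply_lt_of_bruhatCovers (hij : i < j) (hcov : bruhatCovers w (w * swap i j)) :
    w j < w i := by
  have hlt := permLen_lt_of_bruhatLT hcov.1
  refine (lt_or_gt_of_ne (w.injective.ne hij.ne')).resolve_right fun h => ?_
  exact lt_asymm hlt (permLen_lt_mul_swap hij h)

lemma swap_mul_swap_mul_swap_of_lt {k : Fin n} (hik : i < k) (hkj : k < j) :
    swap i j * swap i k * swap k j = swap i k := by
  rw [swap_eq_conj_swap (hik.trans hkj).ne hkj.ne]
  simp [mul_assoc]

/-- A value of `w` strictly between `w j` and `w i` at a position between `i` and `j` would give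
the chain `w * (i j) < w * (i j) * (i k) < w * (i k) < w`. -/
lemma apply_lt_or_lt_apply_of_bruhatCovers (hij : i < j) (hcov : bruhatCovers w (w * swap i j))
    {k : Fin n} (hik : i < k) (hkj : k < j) : w k < w j ∨ w i < w k := by
  by_contra! hk
  have hwk : w j < w k ∧ w k < w i :=
    ⟨hk.1.lt_of_ne (w.injective.ne hkj.ne'), hk.2.lt_of_ne (w.injective.ne hik.ne')⟩
  have hne : k ≠ i ∧ k ≠ j := ⟨hik.ne', hkj.ne⟩
  have h₁ : bruhatStep (w * swap i j) (w * swap i j * swap i k) :=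
    bruhatStep_mul_swap hik (by simpa [swap_apply_of_ne_of_ne hne.1 hne.2] using hwk.1)
  have h₂ : bruhatStep (w * swap i j * swap i k) (w * swap i k) := by
    convert bruhatStep_mul_swap (u := w * swap i j * swap i k) hkj ?_ using 1
    · rw [mul_assoc, mul_assoc, ← mul_assoc (swap i j), swap_mul_swap_mul_swap_of_lt hik hkj]
    · simpa [swap_apply_of_ne_of_ne (hik.trans hkj).ne' hkj.ne'] using
        apply_lt_of_bruhatCovers hij hcov
  have h₃ : bruhatStep (w * swap i k) w := by
    simpa [mul_assoc] using bruhatStep_mul_swap (u := w * swap i k) hik (by simpa using hwk.2)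
  exact hcov.2 _ (.tail (.single h₁) h₂) (.single h₃)

lemma permLen_eq_add_one_of_bruhatCovers (hij : i < j) (hcov : bruhatCovers w (w * swap i j)) :
    permLen w = permLen (w * swap i j) + 1 :=
  permLen_eq_mul_swap_add_one hij (apply_lt_of_bruhatCovers hij hcov)
    fun _ hik hkj => apply_lt_or_lt_apply_of_bruhatCovers hij hcov hik hkj

end Covers

lemma permCode_mul_swap {w : Perm (Fin n)} {i j : Fin n} (hij : i < j) (h : w j < w i) :
    permCode (w * swap i j) i = #{q : Fin n | i < q ∧ w q < w j} := by
  unfold permCode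
  congr 1
  refine filter_congr fun q _ => and_congr_right fun hiq => ?_
  rcases eq_or_ne q j with rfl | hqj
  · simpa using h.le
  · simp [swap_apply_of_ne_of_ne hiq.ne' hqj]

lemma permCode_mul_swap_lt {w : Perm (Fin n)} {i j : Fin n} (hij : i < j) (h : w j < w i) :
    permCode (w * swap i j) i < permCode w i := by
  rw [permCode_mul_swap hij h]
  refine card_lt_card ⟨fun q hq => ?_, fun hsub => ?_⟩
  · simp only [mem_filter, mem_univ, true_and] at hq ⊢
    exact ⟨hq.1, hq.2.trans h⟩
  · simpa using hsub (by simp [hij, h] : j ∈ univ.filter fun k => i < k ∧ w k < w i)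

lemma val_prod_rowsFrom_apply (w : Perm (Fin n)) {t : ℕ} {m : Fin n} (hm : t ≤ (m : ℕ)) :
    ((rowsFrom t w).prod m : ℕ) = t + #{q : Fin n | t ≤ (q : ℕ) ∧ w q < w m} := by
  obtain ⟨hfix, hord⟩ := fixesBelow_prod_rowsFrom w (hm.trans m.isLt.le)
  rw [hfix.val_apply hm]
  congr 2
  exact filter_congr fun q _ => and_congr_right fun hq => hord q m hq hm

lemma simpleT_eq_swap_prod_apply {w : Perm (Fin n)} {i j : Fin n} (hij : i < j) (h : w j < w i) :
    simpleT n (i + permCode (w * swap i j) i) =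
      swap ((descWord n i (permCode (w * swap i j) i) ++ rowsFrom (i + 1) w).prod i)
        ((descWord n i (permCode (w * swap i j) i) ++ rowsFrom (i + 1) w).prod j) := by
  have hc : (i : ℕ) + permCode (w * swap i j) i + 1 < n := by
    have := permCode_mul_swap_lt hij h
    have := val_add_permCode_lt w i
    omega
  have hSi : (rowsFrom (i + 1) w).prod i = i :=
    (fixesBelow_prod_rowsFrom w (t := i + 1) (by omega)).1 i (by omega)
  have hSj : ((rowsFrom (i + 1) w).prod j : ℕ) = i + 1 + permCode (w * swap i j) i := by
    rw [val_prod_rowsFrom_apply w (Fin.lt_def.mp hij), permCode_mul_swap hij h]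
    rfl
  generalize permCode (w * swap i j) i = c at *
  rw [simpleT, dif_pos hc]
  congr 1 <;> apply Fin.ext <;>
    simp only [List.prod_append, Perm.mul_apply, descWord_prod_apply (by omega : (i : ℕ) + c < n),
      hSi, hSj] <;>
    split_ifs <;> omega

lemma sum_filter_le_eq_sum_take_add (f : Fin n → ℕ) (i : Fin n) :
    ∑ k ∈ univ.filter (· ≤ i), f k = (((List.finRange n).take i).map f).sum + f i := by
  have hset : univ.filter (· ≤ i) = ((List.finRange n).take (i + 1)).toFinset := by
    ext k
    simp only [mem_filter, mem_univ, true_and, List.mem_toFinset, List.mem_take_finRange,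
      Fin.le_def]
    omega
  rw [hset, List.sum_toFinset _ ((List.take_sublist _ _).nodup (List.nodup_finRange n)),
    List.take_finRange_succ, List.map_append, List.sum_append]
  simp

lemma rowWord_eq_append_simpleT_cons {w : Perm (Fin n)} {i : Fin n} {c : ℕ}
    (hc : c < permCode w i) : rowWord w i =
      descWord n (i + c + 1) (permCode w i - c - 1) ++ simpleT n (i + c) :: descWord n i c := by
  rw [rowWord_eq_descWord, ← descWord_succ, add_assoc, ← descWord_add]
  congr 1
  omega

lemma exists_rowReading_eq_append_simpleT_cons {w : Perm (Fin n)} {i : Fin n} {c : ℕ}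
    (hc : c < permCode w i) :
    ∃ l : List (Perm (Fin n)),
      l.length = (∑ k ∈ univ.filter (· ≤ i), permCode w k) - c - 1 ∧
      rowReading w = l ++ simpleT n (i + c) :: (descWord n i c ++ rowsFrom (i + 1) w) := by
  refine ⟨((List.finRange n).take i).flatMap (rowWord w) ++
    descWord n (i + c + 1) (permCode w i - c - 1), ?_, ?_⟩
  · have hP : (((List.finRange n).take i).flatMap (rowWord w)).length =
        (((List.finRange n).take i).map (permCode w)).sum := by
      simp only [List.length_flatMap, length_rowWord]
    rw [sum_filter_le_eq_sum_take_add, List.length_append, hP]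
    simp only [descWord, List.length_map, List.length_range]
    omega
  · rw [rowReading, ← List.take_append_drop i (List.finRange n), List.flatMap_append,
      ← rowsFrom, rowsFrom_eq_append, rowWord_eq_append_simpleT_cons hc]
    simp

/-- If `w` covers `w' = w·(i,j)` in the Bruhat order, then deleting the letter at
(1-based) position `I = (α₁ + ⋯ + αᵢ) − α'ᵢ` from the row-reading reduced word of `w`
yields a reduced word for `w'`. -/
theorem rowReading_delete_reduced {n : ℕ} (w w' : Equiv.Perm (Fin n)) (i j : Fin n)
    (hij : i < j) (hw' : w' = w * Equiv.swap i j) (hcov : bruhatCovers w w') :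
    ((rowReading w).eraseIdx
        (((∑ k ∈ Finset.univ.filter (fun k : Fin n => k ≤ i), permCode w k)
          - permCode w' i) - 1)).prod = w' ∧
    ((rowReading w).eraseIdx
        (((∑ k ∈ Finset.univ.filter (fun k : Fin n => k ≤ i), permCode w k)
          - permCode w' i) - 1)).length = permLen w' := by
  subst hw'
  have hwij := apply_lt_of_bruhatCovers hij hcov
  obtain ⟨l, hl, hsplit⟩ := exists_rowReading_eq_append_simpleT_cons (permCode_mul_swap_lt hij hwij)
  rw [← hl, hsplit, List.eraseIdx_append_of_length_le le_rfl, Nat.sub_self, List.eraseIdx_cons_zero]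
  constructor
  · rw [← prod_append_swap_cons_mul_swap, ← simpleT_eq_swap_prod_apply hij hwij, ← hsplit,
      prod_rowReading]
  · have hlen := congrArg List.length hsplit
    rw [length_rowReading, permLen_eq_add_one_of_bruhatCovers hij hcov] at hlen
    simp only [List.length_append, List.length_cons] at hlen ⊢
    omega
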